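/- Corollary (inequality (6.6)). Assume all the hypotheses of Theorem 2 (σ-finite measure space, filtration (𝔽_n), martingale (S_n) with S_n ∈ L^p(μ) for all p ∈ (a,b) with 1 < a < b ≤ ∞, ψ ∈ Ψ(a,b), σ(n) = n^γ L(n) nondecreasing with γ > 0 and C₂ := sup_n L(2n)/L(n) < ∞, and K := sup_n sup_{p∈(a,b)} ‖S_n‖_{L^p(μ)}/(ψ(p)σ(n)) < ∞). Let Δ ∈ (0,1] and let v : {1,2,…} → [1,∞) be nondecreasing with v(n) ≥ (log n)·(log log n)^{1+Δ} for all n ≥ 16. Then there is an absolute constant C such that, with ψ₁(p) = p·ψ(p)/(p − 1), ‖ sup_{n≥1} |S_n|/(v(n)·σ(n)) ‖_{G(ψ₁)} ≤ C · 2^γ · C₂ · K / Δ. -/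

import Mathlib

open MeasureTheory ENNReal Set

noncomputable section

/-- The set of exponents p with a < p and p < b (b may be infinite). -/
def expSet (a : ℝ) (b : ℝ≥0∞) : Set ℝ := {p : ℝ | a < p ∧ ENNReal.ofReal p < b}

/-- The class Ψ(a,b). -/
structure IsPsi (a : ℝ) (b : ℝ≥0∞) (ψ : ℝ → ℝ) : Prop where
  one_le : ∀ p ∈ expSet a b, 1 ≤ ψ p
  bddOnCompacts : ∀ c d : ℝ, c ∈ expSet a b → d ∈ expSet a b → BddAbove (ψ '' Set.Icc c d)
  logConvex : ConvexOn ℝ (expSet a b) fun p => Real.log (ψ p)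

/-- L^p norm (real exponent). -/
def lpNorm {X : Type*} [MeasurableSpace X] (μ : Measure X) (f : X → ℝ) (p : ℝ) : ℝ≥0∞ :=
  (∫⁻ x, ENNReal.ofReal (|f x| ^ p) ∂μ) ^ (1 / p)

/-- Bilateral Grand Lebesgue norm. -/
def glNorm {X : Type*} [MeasurableSpace X] (μ : Measure X) (a : ℝ) (b : ℝ≥0∞) (ψ : ℝ → ℝ)
    (f : X → ℝ) : ℝ≥0∞ :=
  ⨆ p ∈ expSet a b, lpNorm μ f p / ENNReal.ofReal (ψ p)

/-- L^p norm for extended-real-valued functions. -/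
def lpNormE {X : Type*} [MeasurableSpace X] (μ : Measure X) (g : X → EReal) (p : ℝ) : ℝ≥0∞ :=
  (∫⁻ x, (g x).abs ^ p ∂μ) ^ (1 / p)

/-- Bilateral Grand Lebesgue norm for extended-real-valued functions. -/
def glNormE {X : Type*} [MeasurableSpace X] (μ : Measure X) (a : ℝ) (b : ℝ≥0∞) (ψ : ℝ → ℝ)
    (g : X → EReal) : ℝ≥0∞ :=
  ⨆ p ∈ expSet a b, lpNormE μ g p / ENNReal.ofReal (ψ p)

/-- L^p norm for `ℝ≥0∞`-valued functions. -/
def lpNormNN {X : Type*} [MeasurableSpace X] (μ : Measure X) (g : X → ℝ≥0∞) (p : ℝ) : ℝ≥0∞ :=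
  (∫⁻ x, g x ^ p ∂μ) ^ (1 / p)

end

/-!
Split the times `n ≥ 1` into dyadic blocks `2 ^ k ≤ n < 2 ^ (k + 1)`. On the `k`-th block
`|S n| / (v n σ n) ≤ max_{m ≤ 2 ^ (k + 1)} |S m| / (v (2 ^ k) σ (2 ^ k))`, so the maximal function
is dominated by the sum over `k` of these block maxima. Doob's `L^p` inequality for the nonnegative
submartingale `|S|` bounds the `p`-norm of the `k`-th block maximum by
`p / (p - 1) · K ψ(p) σ(2 ^ (k + 1)) ≤ p / (p - 1) · 2 ^ γ C₂ K ψ(p) σ(2 ^ k)`, and Minkowski's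
inequality reduces the claim to `∑ₖ 1 / v (2 ^ k) ≤ 12 / Δ`. The latter holds because
`v (2 ^ k) ≥ k (log k) ^ (1 + Δ) / 8` and
`Δ / (k (log k) ^ (1 + Δ)) ≤ (log (k - 1)) ^ (-Δ) - (log k) ^ (-Δ)` telescopes.

For a σ-finite measure, Doob's `L^p` inequality is derived from the weak-type estimate
`t μ {t ≤ max f} ≤ ∫_{t ≤ max f} f N` through the layer-cake formula for `μ` and for `(f N) • μ`,
followed by Hölder's inequality.
-/

def runningMax {X : Type*} (f : ℕ → X → ℝ) (N : ℕ) (x : X) : ℝ :=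
  (Finset.range (N + 1)).sup' Finset.nonempty_range_add_one fun n => f n x

section RunningMax

variable {X : Type*} {f : ℕ → X → ℝ}

lemma le_runningMax_iff {N : ℕ} {x : X} {t : ℝ} : t ≤ runningMax f N x ↔ ∃ n ≤ N, t ≤ f n x := by
  simp [runningMax, Finset.le_sup'_iff]

lemma le_runningMax (f : ℕ → X → ℝ) {n N : ℕ} (h : n ≤ N) (x : X) : f n x ≤ runningMax f N x :=
  le_runningMax_iff.2 ⟨n, h, le_rfl⟩

lemma exists_runningMax_eq (f : ℕ → X → ℝ) (N : ℕ) (x : X) : ∃ n ≤ N, runningMax f N x = f n x := by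
  obtain ⟨n, hn, h⟩ := Finset.exists_mem_eq_sup' Finset.nonempty_range_add_one fun n => f n x
  exact ⟨n, Nat.lt_succ_iff.1 (Finset.mem_range.1 hn), h⟩

lemma measurable_runningMax [MeasurableSpace X] (hf : ∀ n, Measurable (f n)) (N : ℕ) :
    Measurable (runningMax f N) :=
  Finset.measurable_range_sup'' fun n _ => hf n

end RunningMax

theorem MeasureTheory.Submartingale.mul_meas_le_setLIntegral_runningMax {X : Type*}
    [m0 : MeasurableSpace X] {μ : Measure X} {ℱ : Filtration ℕ m0} [SigmaFiniteFiltration μ ℱ]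
    {f : ℕ → X → ℝ} (hf : Submartingale f ℱ μ) (hnn : 0 ≤ f) (N : ℕ) (t : ℝ) :
    ENNReal.ofReal t * μ {x | t ≤ runningMax f N x} ≤
      ∫⁻ x in {x | t ≤ runningMax f N x}, ENNReal.ofReal (f N x) ∂μ := by
  set B : ℕ → Set X := fun n => {x | t ≤ f n x}
  have hB : ∀ n, MeasurableSet[ℱ n] (B n) := fun n =>
    measurableSet_le measurable_const (hf.stronglyMeasurable n).measurable
  -- `disjointed B n` is the event that `f` first reaches level `t` at time `n`
  have hD : ∀ n, MeasurableSet[ℱ n] (disjointed B n) := fun n => by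
    rw [disjointed_eq_inter_compl]
    exact (hB n).inter <| .iInter fun j => .iInter fun hj => (ℱ.mono hj.le _ (hB j)).compl
  have hD₀ : ∀ n, MeasurableSet (disjointed B n) := fun n => ℱ.le n _ (hD n)
  have hU : {x | t ≤ runningMax f N x} = ⋃ n ∈ Finset.range (N + 1), disjointed B n := by
    rw [biUnion_range_succ_disjointed, partialSups_eq_biSup]
    ext x
    simp [B, le_runningMax_iff]
  have hdisj : PairwiseDisjoint (↑(Finset.range (N + 1))) (disjointed B) :=
    (disjoint_disjointed B).set_pairwise _
  rw [hU, measure_biUnion_finset hdisj fun n _ => hD₀ n,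
    lintegral_biUnion_finset hdisj fun n _ => hD₀ n, Finset.mul_sum]
  refine Finset.sum_le_sum fun n hn => ?_
  have hnN : n ≤ N := Nat.lt_succ_iff.1 (Finset.mem_range.1 hn)
  calc ENNReal.ofReal t * μ (disjointed B n)
      ≤ ∫⁻ x in disjointed B n, ENNReal.ofReal (f n x) ∂μ := by
        rw [← setLIntegral_const]
        exact setLIntegral_mono ((hf.stronglyMeasurable n).measurable.le (ℱ.le n)).ennreal_ofReal
          fun x hx => ENNReal.ofReal_le_ofReal (disjointed_subset B n hx)
    _ = ENNReal.ofReal (∫ x in disjointed B n, f n x ∂μ) :=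
        (ofReal_integral_eq_lintegral_ofReal (hf.integrable n).restrict
          (.of_forall fun x => hnn n x)).symm
    _ ≤ ENNReal.ofReal (∫ x in disjointed B n, f N x ∂μ) :=
        ENNReal.ofReal_le_ofReal (hf.setIntegral_le hnN (hD n))
    _ = ∫⁻ x in disjointed B n, ENNReal.ofReal (f N x) ∂μ :=
        ofReal_integral_eq_lintegral_ofReal (hf.integrable N).restrict
          (.of_forall fun x => hnn N x)

section LpNorm

variable {X : Type*} [MeasurableSpace X] {μ : Measure X}

lemma lpNorm_eq_lpNormNN (f : X → ℝ) {p : ℝ} (hp : 0 ≤ p) :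
    _root_.lpNorm μ f p = lpNormNN μ (fun x => ENNReal.ofReal |f x|) p := by
  simp only [_root_.lpNorm, lpNormNN, ENNReal.ofReal_rpow_of_nonneg (abs_nonneg _) hp]

lemma lintegral_rpow_ne_top_of_lpNormNN_lt_top {G : X → ℝ≥0∞} {p : ℝ} (hp : 0 < p)
    (hG : lpNormNN μ G p < ⊤) : ∫⁻ x, G x ^ p ∂μ ≠ ⊤ := fun h => by
  simp [lpNormNN, h, ENNReal.top_rpow_of_pos (inv_pos.2 hp)] at hG

lemma lpNormNN_mono {F G : X → ℝ≥0∞} (hFG : ∀ x, F x ≤ G x) {p : ℝ} (hp : 0 ≤ p) :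
    lpNormNN μ F p ≤ lpNormNN μ G p := by
  unfold lpNormNN
  gcongr with x
  exact hFG x

lemma lpNormNN_const_mul (c : ℝ≥0∞) {G : X → ℝ≥0∞} (hG : Measurable G) {p : ℝ} (hp : 0 < p) :
    lpNormNN μ (fun x => c * G x) p = c * lpNormNN μ G p := by
  simp only [lpNormNN, ENNReal.mul_rpow_of_nonneg _ _ hp.le]
  rw [lintegral_const_mul _ (hG.pow_const p), ENNReal.mul_rpow_of_nonneg _ _ (by positivity),
    ← ENNReal.rpow_mul, mul_one_div_cancel hp.ne', ENNReal.rpow_one]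

lemma lpNormNN_iSup_of_monotone {F : ℕ → X → ℝ≥0∞} (hF : ∀ n, Measurable (F n))
    (hmono : Monotone F) {p : ℝ} (hp : 0 < p) :
    lpNormNN μ (fun x => ⨆ n, F n x) p = ⨆ n, lpNormNN μ (F n) p := by
  have hpow : ∀ {y : ℝ} (hy : 0 < y) (a : ℕ → ℝ≥0∞), (⨆ n, a n) ^ y = ⨆ n, a n ^ y :=
    fun hy a => (ENNReal.orderIsoRpow _ hy).map_iSup a
  simp only [lpNormNN, hpow hp]
  rw [lintegral_iSup (fun n => (hF n).pow_const p) fun m n hmn x => by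
    gcongr; exact hmono hmn x, hpow (one_div_pos.2 hp)]

theorem lpNormNN_sum_le {ι : Type*} (s : Finset ι) {F : ι → X → ℝ≥0∞}
    (hF : ∀ i, AEMeasurable (F i) μ) {p : ℝ} (hp : 1 ≤ p) :
    lpNormNN μ (fun x => ∑ i ∈ s, F i x) p ≤ ∑ i ∈ s, lpNormNN μ (F i) p := by
  rw [← Finset.sum_fn]
  refine Finset.le_sum_of_subadditive_on_pred (fun G => lpNormNN μ G p) (AEMeasurable · μ)
    ?_ (fun G H hG hH => ENNReal.lintegral_Lp_add_le hG hH hp) (fun G H hG hH => hG.add hH) F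
    fun i _ => hF i
  simp [lpNormNN, show 0 < p by linarith]

theorem lpNormNN_tsum_le {F : ℕ → X → ℝ≥0∞} (hF : ∀ i, Measurable (F i)) {p : ℝ}
    (hp : 1 ≤ p) : lpNormNN μ (fun x => ∑' i, F i x) p ≤ ∑' i, lpNormNN μ (F i) p := by
  simp_rw [ENNReal.tsum_eq_iSup_nat]
  rw [lpNormNN_iSup_of_monotone (fun n => Finset.measurable_sum _ fun i _ => hF i)
    (fun m n hmn x => Finset.sum_le_sum_of_subset (Finset.range_subset_range.2 hmn))
    (by linarith)]
  exact iSup_mono fun n => lpNormNN_sum_le _ (fun i => (hF i).aemeasurable) hp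

theorem lintegral_rpow_le_of_mul_meas_le {g : X → ℝ} (hg : Measurable g) (hg₀ : 0 ≤ g)
    {F : X → ℝ≥0∞} (hF : Measurable F) {p : ℝ} (hp : 1 < p)
    (hweak : ∀ t > 0, ENNReal.ofReal t * μ {x | t ≤ g x} ≤ ∫⁻ x in {x | t ≤ g x}, F x ∂μ) :
    ∫⁻ x, ENNReal.ofReal (g x) ^ p ∂μ ≤
      ENNReal.ofReal (p / (p - 1)) * ∫⁻ x, F x * ENNReal.ofReal (g x) ^ (p - 1) ∂μ := by
  have hp₀ : 0 < p := by linarith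
  have hp₁ : 0 < p - 1 := by linarith
  set ν := μ.withDensity F
  have hμ := lintegral_rpow_eq_lintegral_meas_le_mul μ (.of_forall hg₀) hg.aemeasurable hp₀
  have hν := lintegral_rpow_eq_lintegral_meas_le_mul ν (.of_forall hg₀) hg.aemeasurable hp₁
  have hlevel : ∀ t > 0, μ {x | t ≤ g x} * ENNReal.ofReal (t ^ (p - 1)) ≤
      ν {x | t ≤ g x} * ENNReal.ofReal (t ^ (p - 1 - 1)) := fun t ht => by
    rw [withDensity_apply _ (measurableSet_le measurable_const hg)]
    calc μ {x | t ≤ g x} * ENNReal.ofReal (t ^ (p - 1))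
        = ENNReal.ofReal t * μ {x | t ≤ g x} * ENNReal.ofReal (t ^ (p - 1 - 1)) := by
          rw [show p - 1 = (p - 1 - 1) + 1 by ring, Real.rpow_add_one ht.ne',
            ENNReal.ofReal_mul (by positivity), add_sub_cancel_right]
          ring
      _ ≤ _ := by gcongr; exact hweak t ht
  calc ∫⁻ x, ENNReal.ofReal (g x) ^ p ∂μ
      = ENNReal.ofReal p * ∫⁻ t in Ioi 0, μ {x | t ≤ g x} * ENNReal.ofReal (t ^ (p - 1)) := by
        rw [← hμ]
        exact lintegral_congr fun x => ENNReal.ofReal_rpow_of_nonneg (hg₀ x) hp₀.le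
    _ ≤ ENNReal.ofReal p * ∫⁻ t in Ioi 0, ν {x | t ≤ g x} * ENNReal.ofReal (t ^ (p - 1 - 1)) := by
        gcongr ENNReal.ofReal p * ?_
        exact setLIntegral_mono' measurableSet_Ioi hlevel
    _ = ENNReal.ofReal (p / (p - 1)) * ∫⁻ x, ENNReal.ofReal (g x ^ (p - 1)) ∂ν := by
        rw [hν, ← mul_assoc, ← ENNReal.ofReal_mul (by positivity), div_mul_cancel₀ _ hp₁.ne']
    _ = ENNReal.ofReal (p / (p - 1)) * ∫⁻ x, F x * ENNReal.ofReal (g x) ^ (p - 1) ∂μ := by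
        rw [lintegral_withDensity_eq_lintegral_mul _ hF (hg.pow_const _).ennreal_ofReal]
        congr 1
        exact lintegral_congr fun x => by
          simp only [Pi.mul_apply, ENNReal.ofReal_rpow_of_nonneg (hg₀ x) hp₁.le]

theorem lpNormNN_le_of_lintegral_rpow_le_mul {F G : X → ℝ≥0∞} (hF : AEMeasurable F μ)
    (hG : AEMeasurable G μ) {p : ℝ} (hp : 1 < p) (hfin : ∫⁻ x, G x ^ p ∂μ ≠ ⊤) {c : ℝ≥0∞}
    (h : ∫⁻ x, G x ^ p ∂μ ≤ c * ∫⁻ x, F x * G x ^ (p - 1) ∂μ) :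
    lpNormNN μ G p ≤ c * lpNormNN μ F p := by
  set I := ∫⁻ x, G x ^ p ∂μ
  have hq := Real.HolderConjugate.conjExponent hp
  set q := Real.conjExponent p
  have hHolder : ∫⁻ x, F x * G x ^ (p - 1) ∂μ ≤ lpNormNN μ F p * I ^ (1 / q) := by
    refine (ENNReal.lintegral_mul_le_Lp_mul_Lq μ hq hF (hG.pow_const _)).trans_eq ?_
    simp_rw [← ENNReal.rpow_mul, hq.sub_one_mul_conj]
    rfl
  rcases eq_or_ne I 0 with hI | hI
  · rw [lpNormNN, show ∫⁻ x, G x ^ p ∂μ = 0 from hI, ENNReal.zero_rpow_of_pos (by positivity)]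
    exact bot_le
  have hsplit : I = lpNormNN μ G p * I ^ (1 / q) := by
    rw [lpNormNN, ← ENNReal.rpow_add _ _ hI hfin, one_div, one_div, hq.inv_add_inv_eq_one,
      ENNReal.rpow_one]
  refine (ENNReal.mul_le_mul_iff_left (c := I ^ (1 / q)) (by simp [hI, hfin])
    (by simp [hI, hfin])).1 ?_
  rw [← hsplit, mul_assoc]
  exact h.trans (mul_le_mul_right hHolder c)

end LpNorm

lemma iSup_div_le_tsum_runningMax {X : Type*} (f : ℕ → X → ℝ) {w : ℕ → ℝ}
    (hw_pos : ∀ n, 1 ≤ n → 0 < w n) (hw_mono : ∀ m n, 1 ≤ m → m ≤ n → w m ≤ w n) (x : X) :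
    ⨆ n : ℕ, ⨆ _ : 1 ≤ n, ENNReal.ofReal (f n x / w n) ≤
      ∑' k, ENNReal.ofReal (w (2 ^ k))⁻¹ * ENNReal.ofReal (runningMax f (2 ^ (k + 1)) x) := by
  refine iSup₂_le fun n hn => ?_
  set k := Nat.log 2 n
  have hk : 2 ^ k ≤ n := Nat.pow_log_le_self 2 (by omega)
  have hk' : n < 2 ^ (k + 1) := Nat.lt_pow_succ_log_self (by norm_num) n
  refine le_trans ?_ (ENNReal.le_tsum k)
  rw [div_eq_inv_mul, ENNReal.ofReal_mul (inv_nonneg.2 (hw_pos n hn).le)]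
  exact mul_le_mul' (ENNReal.ofReal_le_ofReal <| inv_anti₀ (hw_pos _ Nat.one_le_two_pow)
    (hw_mono _ _ Nat.one_le_two_pow hk)) (ENNReal.ofReal_le_ofReal <| le_runningMax f hk'.le x)

namespace MeasureTheory.Submartingale

variable {X : Type*} [m0 : MeasurableSpace X] {μ : Measure X} {ℱ : Filtration ℕ m0}
  [SigmaFiniteFiltration μ ℱ] {f : ℕ → X → ℝ}

theorem lpNormNN_runningMax_le (hf : Submartingale f ℱ μ) (hnn : 0 ≤ f) {p : ℝ} (hp : 1 < p)
    (hLp : ∀ n, lpNormNN μ (fun x => ENNReal.ofReal (f n x)) p < ⊤) (N : ℕ) :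
    lpNormNN μ (fun x => ENNReal.ofReal (runningMax f N x)) p ≤
      ENNReal.ofReal (p / (p - 1)) * lpNormNN μ (fun x => ENNReal.ofReal (f N x)) p := by
  have hmeas : ∀ n, Measurable (f n) := fun n =>
    (hf.stronglyMeasurable n).measurable.le (ℱ.le n)
  have hmax : Measurable (runningMax f N) := measurable_runningMax hmeas N
  have hle : ∀ x, ENNReal.ofReal (runningMax f N x) ^ p ≤
      ∑ n ∈ Finset.range (N + 1), ENNReal.ofReal (f n x) ^ p := fun x => by
    obtain ⟨n, hn, h⟩ := exists_runningMax_eq f N x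
    rw [h]
    exact Finset.single_le_sum (f := fun n => ENNReal.ofReal (f n x) ^ p) (fun _ _ => bot_le)
      (Finset.mem_range.2 (Nat.lt_succ_of_le hn))
  have hfin : ∫⁻ x, ENNReal.ofReal (runningMax f N x) ^ p ∂μ ≠ ⊤ := by
    refine ne_top_of_le_ne_top ?_ ((lintegral_mono hle).trans_eq
      (lintegral_finsetSum _ fun n _ => (hmeas n).ennreal_ofReal.pow_const p))
    exact ENNReal.sum_ne_top.2 fun n _ =>
      lintegral_rpow_ne_top_of_lpNormNN_lt_top (by linarith) (hLp n)
  refine lpNormNN_le_of_lintegral_rpow_le_mul (hmeas N).ennreal_ofReal.aemeasurable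
    hmax.ennreal_ofReal.aemeasurable hp hfin ?_
  exact lintegral_rpow_le_of_mul_meas_le hmax
    (fun x => (hnn 0 x).trans (le_runningMax f (Nat.zero_le N) x)) (hmeas N).ennreal_ofReal hp
    fun t _ => hf.mul_meas_le_setLIntegral_runningMax hnn N t

theorem lpNormNN_iSup_div_le (hf : Submartingale f ℱ μ) (hnn : 0 ≤ f) {p : ℝ} (hp : 1 < p)
    (hLp : ∀ n, lpNormNN μ (fun x => ENNReal.ofReal (f n x)) p < ⊤) {w : ℕ → ℝ}
    (hw_pos : ∀ n, 1 ≤ n → 0 < w n) (hw_mono : ∀ m n, 1 ≤ m → m ≤ n → w m ≤ w n) :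
    lpNormNN μ (fun x => ⨆ n : ℕ, ⨆ _ : 1 ≤ n, ENNReal.ofReal (f n x / w n)) p ≤
      ENNReal.ofReal (p / (p - 1)) * ∑' k, ENNReal.ofReal (w (2 ^ k))⁻¹ *
        lpNormNN μ (fun x => ENNReal.ofReal (f (2 ^ (k + 1)) x)) p := by
  have hmeas : ∀ n, Measurable (f n) := fun n =>
    (hf.stronglyMeasurable n).measurable.le (ℱ.le n)
  have hmax : ∀ N, Measurable fun x => ENNReal.ofReal (runningMax f N x) := fun N =>
    (measurable_runningMax hmeas N).ennreal_ofReal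
  calc _ ≤ lpNormNN μ (fun x => ∑' k, ENNReal.ofReal (w (2 ^ k))⁻¹ *
          ENNReal.ofReal (runningMax f (2 ^ (k + 1)) x)) p :=
        lpNormNN_mono (iSup_div_le_tsum_runningMax f hw_pos hw_mono) (by linarith)
    _ ≤ ∑' k, ENNReal.ofReal (w (2 ^ k))⁻¹ *
          lpNormNN μ (fun x => ENNReal.ofReal (runningMax f (2 ^ (k + 1)) x)) p := by
        refine (lpNormNN_tsum_le (fun k => measurable_const.mul (hmax _)) hp.le).trans_eq ?_
        exact tsum_congr fun k => lpNormNN_const_mul _ (hmax _) (by linarith)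
    _ ≤ ∑' k, ENNReal.ofReal (w (2 ^ k))⁻¹ * (ENNReal.ofReal (p / (p - 1)) *
          lpNormNN μ (fun x => ENNReal.ofReal (f (2 ^ (k + 1)) x)) p) := by
        gcongr with k
        exact hf.lpNormNN_runningMax_le hnn hp hLp _
    _ = _ := by
        rw [← ENNReal.tsum_mul_left]
        exact tsum_congr fun k => mul_left_comm _ _ _

end MeasureTheory.Submartingale

lemma two_mul_rpow_mul_le {γ C : ℝ} {L : ℕ → ℝ} {n : ℕ} (hLn : 0 < L n)
    (hL : L (2 * n) / L n ≤ C) :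
    ((2 * n : ℕ) : ℝ) ^ γ * L (2 * n) ≤ 2 ^ γ * C * ((n : ℝ) ^ γ * L n) := by
  have h := (div_le_iff₀ hLn).1 hL
  push_cast
  rw [Real.mul_rpow zero_le_two n.cast_nonneg]
  calc 2 ^ γ * (n : ℝ) ^ γ * L (2 * n) ≤ 2 ^ γ * (n : ℝ) ^ γ * (C * L n) := by gcongr
    _ = _ := by ring

namespace MeasureTheory.Martingale

variable {X : Type*} [m0 : MeasurableSpace X] {μ : Measure X} {ℱ : Filtration ℕ m0}
  {S : ℕ → X → ℝ}

lemma submartingale_abs (hS : Martingale S ℱ μ) :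
    Submartingale (fun n x => |S n x|) ℱ μ :=
  hS.submartingale.sup hS.neg.submartingale

theorem lpNormNN_iSup_abs_div_le [SigmaFiniteFiltration μ ℱ] (hS : Martingale S ℱ μ) {p : ℝ}
    (hp : 1 < p) (hLp : ∀ n, _root_.lpNorm μ (S n) p < ⊤) {σ v : ℕ → ℝ} {B D : ℝ} (hB : 0 ≤ B)
    (hσ_pos : ∀ n, 1 ≤ n → 0 < σ n) (hσ_mono : ∀ m n, 1 ≤ m → m ≤ n → σ m ≤ σ n)
    (hσ_doubling : ∀ n, 1 ≤ n → σ (2 * n) ≤ D * σ n) (hv : ∀ n, 1 ≤ n → 1 ≤ v n)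
    (hv_mono : ∀ m n, 1 ≤ m → m ≤ n → v m ≤ v n)
    (hS_le : ∀ n, 1 ≤ n → _root_.lpNorm μ (S n) p ≤ ENNReal.ofReal (B * σ n)) :
    lpNormNN μ (fun x => ⨆ n : ℕ, ⨆ _ : 1 ≤ n, ENNReal.ofReal (|S n x| / (v n * σ n))) p ≤
      ENNReal.ofReal (p / (p - 1)) * ∑' k, ENNReal.ofReal (B * D / v (2 ^ k)) := by
  have hp₀ : 0 ≤ p := by linarith
  have hv_pos : ∀ n, 1 ≤ n → 0 < v n := fun n hn => zero_lt_one.trans_le (hv n hn)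
  refine (hS.submartingale_abs.lpNormNN_iSup_div_le (fun n x => abs_nonneg _) hp
    (fun n => lpNorm_eq_lpNormNN (S n) hp₀ ▸ hLp n) (w := fun n => v n * σ n)
    (fun n hn => mul_pos (hv_pos n hn) (hσ_pos n hn))
    (fun m n hm hmn => mul_le_mul (hv_mono m n hm hmn) (hσ_mono m n hm hmn) (hσ_pos m hm).le
      (hv_pos n (hm.trans hmn)).le)).trans ?_
  gcongr ENNReal.ofReal (p / (p - 1)) * ?_
  refine ENNReal.tsum_le_tsum fun k => ?_
  have hk : 1 ≤ 2 ^ k := Nat.one_le_two_pow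
  rw [← lpNorm_eq_lpNormNN _ hp₀]
  calc ENNReal.ofReal (v (2 ^ k) * σ (2 ^ k))⁻¹ * _root_.lpNorm μ (S (2 ^ (k + 1))) p
      ≤ ENNReal.ofReal (v (2 ^ k) * σ (2 ^ k))⁻¹ * ENNReal.ofReal (B * (D * σ (2 ^ k))) := by
        gcongr
        refine (hS_le _ Nat.one_le_two_pow).trans (ENNReal.ofReal_le_ofReal ?_)
        rw [pow_succ']
        exact mul_le_mul_of_nonneg_left (hσ_doubling _ hk) hB
      _ = ENNReal.ofReal (B * D / v (2 ^ k)) := by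
        rw [← ENNReal.ofReal_mul (inv_nonneg.2 (mul_pos (hv_pos _ hk) (hσ_pos _ hk)).le)]
        congr 1
        field_simp [(hσ_pos _ hk).ne']

end MeasureTheory.Martingale

namespace Real

lemma mul_rpow_mul_sub_le_rpow_neg_sub_rpow_neg {a b Δ : ℝ} (ha : 0 < a) (hab : a ≤ b)
    (hΔ : 0 ≤ Δ) : Δ * b ^ (-Δ - 1) * (b - a) ≤ a ^ (-Δ) - b ^ (-Δ) := by
  have hb : 0 < b := ha.trans_le hab
  -- `(b / a) ^ Δ = exp (Δ log (b / a)) ≥ 1 + Δ log (b / a) ≥ 1 + Δ (1 - a / b)`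
  have hratio : 1 + Δ * (1 - a / b) ≤ (b / a) ^ Δ := by
    have hlog : 1 - a / b ≤ log (b / a) := by
      simpa using one_sub_inv_le_log_of_pos (div_pos hb ha)
    rw [rpow_def_of_pos (div_pos hb ha)]
    nlinarith [add_one_le_exp (log (b / a) * Δ)]
  have ha' : a ^ (-Δ) = b ^ (-Δ) * (b / a) ^ Δ := by
    rw [div_rpow hb.le ha.le, rpow_neg ha.le, rpow_neg hb.le]
    field_simp
  have hb' : b ^ (-Δ - 1) * (b - a) = b ^ (-Δ) * (1 - a / b) := by
    rw [rpow_sub_one hb.ne']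
    field_simp
  rw [mul_assoc, hb', ha']
  nlinarith [rpow_nonneg hb.le (-Δ)]

lemma one_lt_log_of_three_le {t : ℝ} (ht : 3 ≤ t) : 1 < log t := by
  rw [lt_log_iff_exp_lt (by linarith)]
  exact exp_one_lt_d9.trans_le (by norm_num; linarith)

lemma div_mul_log_rpow_le_log_rpow_neg_sub {Δ r : ℝ} (hΔ : 0 ≤ Δ) (hr : 2 < r) :
    Δ / (r * log r ^ (1 + Δ)) ≤ log (r - 1) ^ (-Δ) - log r ^ (-Δ) := by
  have hlog₀ : 0 < log (r - 1) := log_pos (by linarith)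
  have hlog : 0 < log r := log_pos (by linarith)
  have hgap : 1 / r ≤ log r - log (r - 1) := by
    have := log_le_sub_one_of_pos (div_pos (by linarith : 0 < r - 1) (by linarith : 0 < r))
    rw [log_div (by linarith) (by linarith)] at this
    have : (r - 1) / r - 1 = -(1 / r) := by field_simp; ring
    linarith
  refine le_trans ?_ (mul_rpow_mul_sub_le_rpow_neg_sub_rpow_neg hlog₀
    (log_le_log (by linarith) (by linarith)) hΔ)
  calc Δ / (r * log r ^ (1 + Δ)) = Δ * log r ^ (-Δ - 1) * (1 / r) := by
        rw [show -Δ - 1 = -(1 + Δ) by ring, rpow_neg hlog.le]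
        field_simp
    _ ≤ Δ * log r ^ (-Δ - 1) * (log r - log (r - 1)) := by gcongr

lemma mul_log_rpow_le_eight_mul_log_two_pow {k : ℕ} (hk : 4 ≤ k) {Δ : ℝ} (hΔ₀ : 0 ≤ Δ)
    (hΔ₁ : Δ ≤ 1) :
    k * log k ^ (1 + Δ) ≤
      8 * (log ((2 ^ k : ℕ) : ℝ) * log (log ((2 ^ k : ℕ) : ℝ)) ^ (1 + Δ)) := by
  have hk' : (4 : ℝ) ≤ k := by exact_mod_cast hk
  have hlog2 : 1 / 2 < log 2 := lt_trans (by norm_num) log_two_gt_d9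
  have hlogk : 2 * log 2 ≤ log k := by
    rw [← log_rpow two_pos]
    exact log_le_log (by positivity) (by norm_num; linarith)
  have hlog2k : log ((2 ^ k : ℕ) : ℝ) = k * log 2 := by push_cast; rw [log_pow]
  have hhalf : log k / 2 ≤ log (k * log 2) := by
    rw [log_mul (by positivity) (by positivity)]
    have : log (1 / 2) ≤ log (log 2) := log_le_log (by norm_num) hlog2.le
    rw [one_div, log_inv] at this
    linarith
  have hpow : log k ^ (1 + Δ) ≤ 4 * (log k / 2) ^ (1 + Δ) := by
    rw [div_rpow (by linarith) zero_le_two, mul_div, le_div_iff₀ (by positivity)]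
    have : (2 : ℝ) ^ (1 + Δ) ≤ 2 ^ (2 : ℝ) := rpow_le_rpow_of_exponent_le one_le_two (by linarith)
    have h4 : (2 : ℝ) ^ (2 : ℝ) = 4 := by norm_num
    nlinarith [rpow_nonneg (show 0 ≤ log k by linarith) (1 + Δ)]
  rw [hlog2k]
  calc (k : ℝ) * log k ^ (1 + Δ) ≤ (2 * (k * log 2)) * (4 * (log k / 2) ^ (1 + Δ)) := by
        gcongr; nlinarith
    _ ≤ (2 * (k * log 2)) * (4 * log (k * log 2) ^ (1 + Δ)) := by gcongr
    _ = _ := by ring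

end Real

section DyadicSeries

variable {Δ : ℝ} {v : ℕ → ℝ}

lemma inv_two_pow_le_mul_log_rpow_neg_sub (hΔ₀ : 0 < Δ) (hΔ₁ : Δ ≤ 1)
    (hv_log : ∀ n : ℕ, 16 ≤ n → Real.log n * Real.log (Real.log n) ^ (1 + Δ) ≤ v n)
    {k : ℕ} (hk : 4 ≤ k) :
    (v (2 ^ k))⁻¹ ≤ 8 / Δ * (Real.log (k - 1) ^ (-Δ) - Real.log k ^ (-Δ)) := by
  have hk' : (4 : ℝ) ≤ k := by exact_mod_cast hk
  have hlog : 0 < Real.log k := Real.log_pos (by linarith)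
  have hlow : k * Real.log k ^ (1 + Δ) ≤ 8 * v (2 ^ k) :=
    (Real.mul_log_rpow_le_eight_mul_log_two_pow hk hΔ₀.le hΔ₁).trans
      (mul_le_mul_of_nonneg_left (hv_log _ (Nat.pow_le_pow_right two_pos hk)) (by norm_num))
  calc (v (2 ^ k))⁻¹ ≤ 8 / (k * Real.log k ^ (1 + Δ)) := by
        rw [inv_le_comm₀ (by linarith [show 0 < k * Real.log k ^ (1 + Δ) by positivity])
          (by positivity), inv_div, div_le_iff₀' (by norm_num)]
        exact hlow
    _ = 8 / Δ * (Δ / (k * Real.log k ^ (1 + Δ))) := by field_simp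
    _ ≤ 8 / Δ * (Real.log (k - 1) ^ (-Δ) - Real.log k ^ (-Δ)) := by
        gcongr
        exact Real.div_mul_log_rpow_le_log_rpow_neg_sub hΔ₀.le (by linarith)

lemma sum_range_inv_two_pow_le (hΔ₀ : 0 < Δ) (hΔ₁ : Δ ≤ 1) (hv : ∀ n, 1 ≤ n → 1 ≤ v n)
    (hv_log : ∀ n : ℕ, 16 ≤ n → Real.log n * Real.log (Real.log n) ^ (1 + Δ) ≤ v n) (n : ℕ) :
    ∑ k ∈ Finset.range n, (v (2 ^ k))⁻¹ ≤ 12 / Δ := by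
  set u : ℝ → ℝ := fun t => Real.log t ^ (-Δ)
  have hv_inv : ∀ k, (v (2 ^ k))⁻¹ ≤ 1 := fun k => inv_le_one_of_one_le₀ (hv _ Nat.one_le_two_pow)
  have htele : ∀ m : ℕ,
      ∑ k ∈ Finset.range (m + 4), (v (2 ^ k))⁻¹ ≤ 4 + 8 / Δ * (u 3 - u (m + 3)) := by
    intro m
    induction m with
    | zero =>
      simpa using (Finset.sum_le_sum fun k (_ : k ∈ Finset.range 4) => hv_inv k).trans_eq (by simp)
    | succ m ih =>
      have := inv_two_pow_le_mul_log_rpow_neg_sub hΔ₀ hΔ₁ hv_log (k := m + 4) (by omega)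
      rw [show m + 1 + 4 = m + 4 + 1 by ring, Finset.sum_range_succ]
      push_cast at this ⊢
      rw [show (m : ℝ) + 4 - 1 = m + 3 by ring] at this
      rw [show (m : ℝ) + 1 + 3 = m + 4 by ring]
      linarith
  have hu₃ : u 3 ≤ 1 :=
    Real.rpow_le_one_of_one_le_of_nonpos (Real.one_lt_log_of_three_le le_rfl).le (by linarith)
  have hu : 0 ≤ u (n + 3) :=
    Real.rpow_nonneg (Real.log_nonneg (by linarith [n.cast_nonneg (α := ℝ)])) _
  calc ∑ k ∈ Finset.range n, (v (2 ^ k))⁻¹ ≤ ∑ k ∈ Finset.range (n + 4), (v (2 ^ k))⁻¹ :=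
        Finset.sum_le_sum_of_subset_of_nonneg (Finset.range_subset_range.2 (by omega))
          fun k _ _ => inv_nonneg.2 (zero_le_one.trans (hv _ Nat.one_le_two_pow))
    _ ≤ 4 + 8 / Δ * (u 3 - u (n + 3)) := htele n
    _ ≤ 4 / Δ + 8 / Δ * 1 := by
        gcongr
        · rw [le_div_iff₀ hΔ₀]; nlinarith
        · linarith
    _ = 12 / Δ := by ring

lemma tsum_ofReal_inv_two_pow_le (hΔ₀ : 0 < Δ) (hΔ₁ : Δ ≤ 1) (hv : ∀ n, 1 ≤ n → 1 ≤ v n)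
    (hv_log : ∀ n : ℕ, 16 ≤ n → Real.log n * Real.log (Real.log n) ^ (1 + Δ) ≤ v n) :
    ∑' k, ENNReal.ofReal (v (2 ^ k))⁻¹ ≤ ENNReal.ofReal (12 / Δ) :=
  ENNReal.tsum_le_of_sum_range_le fun n => by
    rw [← ENNReal.ofReal_sum_of_nonneg fun k _ =>
      inv_nonneg.2 (zero_le_one.trans (hv _ Nat.one_le_two_pow))]
    exact ENNReal.ofReal_le_ofReal (sum_range_inv_two_pow_le hΔ₀ hΔ₁ hv hv_log n)

end DyadicSeries

/-- Corollary (inequality (6.6)). -/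
theorem martingale_maximal_BGL_loglog :
    ∃ C : ℝ, 0 < C ∧
      ∀ (X : Type*) [m0 : MeasurableSpace X], ∀ (μ : Measure X) [SigmaFinite μ],
      ∀ (a : ℝ) (b : ℝ≥0∞), 1 < a → ENNReal.ofReal a < b →
      ∀ (ψ : ℝ → ℝ), IsPsi a b ψ →
      ∀ (ℱ : Filtration ℕ m0), (∀ n, SigmaFinite (μ.trim (ℱ.le n))) →
      ∀ (S : ℕ → X → ℝ), Martingale S ℱ μ → (∀ n, Integrable (S n) μ) →
      (∀ n, ∀ p ∈ expSet a b, lpNorm μ (S n) p < ⊤) →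
      ∀ (γ : ℝ), 0 < γ →
      ∀ (L : ℕ → ℝ), (∀ n, 1 ≤ n → 0 < L n) →
      ∀ (C₂ : ℝ), (∀ n, 1 ≤ n → L (2 * n) / L n ≤ C₂) →
      (∀ m n : ℕ, 1 ≤ m → m ≤ n → (m : ℝ) ^ γ * L m ≤ (n : ℝ) ^ γ * L n) →
      ∀ (K : ℝ), 0 ≤ K →
      (∀ n, 1 ≤ n → ∀ p ∈ expSet a b,
        lpNorm μ (S n) p ≤ ENNReal.ofReal (K * ψ p * ((n : ℝ) ^ γ * L n))) →
      ∀ (Δ : ℝ), 0 < Δ → Δ ≤ 1 →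
      ∀ (v : ℕ → ℝ), (∀ n, 1 ≤ n → 1 ≤ v n) →
      (∀ m n : ℕ, 1 ≤ m → m ≤ n → v m ≤ v n) →
      (∀ n : ℕ, 16 ≤ n →
        Real.log n * Real.log (Real.log n) ^ (1 + Δ) ≤ v n) →
      (⨆ p ∈ expSet a b,
          lpNormNN μ
            (fun x => ⨆ n : ℕ, ⨆ _ : 1 ≤ n,
              ENNReal.ofReal (|S n x| / (v n * ((n : ℝ) ^ γ * L n)))) p /
            ENNReal.ofReal (p * ψ p / (p - 1))) ≤
        ENNReal.ofReal (C * (2 : ℝ) ^ γ * C₂ * K / Δ) := by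
  refine ⟨12, by norm_num, ?_⟩
  intro X _ μ _ a b ha _ ψ hψ ℱ hℱ S hS _ hLp γ _ L hL C₂ hC₂ hσ_mono K hK hS_le Δ hΔ₀ hΔ₁
    v hv hv_mono hv_log
  have : SigmaFiniteFiltration μ ℱ := ⟨hℱ⟩
  have hC₂₀ : 0 ≤ C₂ := (div_pos (hL 2 one_le_two) (hL 1 le_rfl)).le.trans (hC₂ 1 le_rfl)
  refine iSup₂_le fun p hp => ENNReal.div_le_of_le_mul ?_
  have hp₁ : 1 < p := ha.trans hp.1
  have hψp : 1 ≤ ψ p := hψ.one_le p hp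
  have hBD : 0 ≤ K * ψ p * (2 ^ γ * C₂) := by positivity
  calc _ ≤ ENNReal.ofReal (p / (p - 1)) *
        ∑' k, ENNReal.ofReal (K * ψ p * (2 ^ γ * C₂) / v (2 ^ k)) :=
        hS.lpNormNN_iSup_abs_div_le (σ := fun n => (n : ℝ) ^ γ * L n) hp₁
          (fun n => hLp n p hp) (by positivity) (fun n hn => mul_pos (by positivity) (hL n hn))
          hσ_mono
          (fun n hn => two_mul_rpow_mul_le (hL n hn) (hC₂ n hn)) hv hv_mono
          (fun n hn => (hS_le n hn p hp).trans_eq (by rw [mul_assoc]))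
    _ ≤ ENNReal.ofReal (p / (p - 1)) * (ENNReal.ofReal (K * ψ p * (2 ^ γ * C₂)) *
        ENNReal.ofReal (12 / Δ)) := by
        simp_rw [div_eq_mul_inv _ (v _), ENNReal.ofReal_mul hBD, ENNReal.tsum_mul_left]
        gcongr
        exact tsum_ofReal_inv_two_pow_le hΔ₀ hΔ₁ hv hv_log
    _ = _ := by
        rw [← ENNReal.ofReal_mul hBD, ← ENNReal.ofReal_mul (by positivity),
          ← ENNReal.ofReal_mul (by positivity)]
        congr 1
        field_simp
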